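/- arXiv:1104.4332 — 2 statements merged into one kernel-verified Lean document; each statement's English description precedes it below -/
import Mathlib

section
/- For every integer p ≥ 0 and positive integer N, S_{2p+1}(N) = (1/(2p+2))·[ ((N+1)^{2p+2} + N^{2p+2} − 1)/2 − Σ_{q=0}^{p−1} C(2p+2, 2q+1)·S_{2q+1}(N) ], where S_k(N) = Σ_{n=1}^N n^k. -/
open Finset

/-- The power sum `S_k(N) = ∑_{n=1}^N n^k`. -/
def powerSum (k N : ℕ) : ℚ := ∑ n ∈ Finset.Icc 1 N, (n : ℚ) ^ k

/-! For an even exponent `2m` the binomial theorem gives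
`(n + 1)^(2m) - (n - 1)^(2m) = 2 ∑_{q<m} C(2m, 2q+1) n^(2q+1)`, the even-index terms cancelling.
Summing over `n = 1, …, N` telescopes the left side to `(N + 1)^(2m) + N^(2m) - 1`; for `m = p + 1`
the top term of the right side is `C(2p+2, 2p+1) S_{2p+1}(N) = (2p + 2) S_{2p+1}(N)`, which is
solved for. -/

theorem Finset.sum_range_two_mul {M : Type*} [AddCommMonoid M] (f : ℕ → M) (n : ℕ) :
    ∑ i ∈ range (2 * n), f i = ∑ i ∈ range n, (f (2 * i) + f (2 * i + 1)) := by
  induction n with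
  | zero => simp
  | succ n ih => rw [mul_add_one, sum_range_succ, sum_range_succ, add_assoc, ih, sum_range_succ]

theorem add_pow_sub_sub_pow_two_mul {R : Type*} [CommRing R] (x y : R) (m : ℕ) :
    (x + y) ^ (2 * m) - (x - y) ^ (2 * m) =
      2 * ∑ q ∈ range m, ((2 * m).choose (2 * q + 1) : R) * x ^ (2 * q + 1) *
        y ^ (2 * m - (2 * q + 1)) := by
  have neg_one_pow_even (k : ℕ) : (-1 : R) ^ (2 * k + 2 * m) = 1 := by
    rw [← mul_add, pow_mul, neg_one_sq, one_pow]
  have neg_one_pow_odd (k : ℕ) : (-1 : R) ^ (2 * k + 1 + 2 * m) = -1 := by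
    rw [add_right_comm, pow_succ, neg_one_pow_even, one_mul]
  rw [add_pow, sub_pow, ← sum_sub_distrib, sum_range_succ, sum_range_two_mul, mul_sum]
  simp only [neg_one_pow_even, neg_one_pow_odd, one_mul, sub_self, zero_add, add_zero]
  exact sum_congr rfl fun q _ => by ring

theorem powerSum_succ (k N : ℕ) : powerSum k (N + 1) = powerSum k N + ((N : ℚ) + 1) ^ k := by
  rw [powerSum, powerSum, sum_Icc_succ_top (Nat.le_add_left 1 N), Nat.cast_succ]

theorem two_mul_sum_choose_mul_powerSum_odd {m : ℕ} (hm : m ≠ 0) (N : ℕ) :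
    2 * ∑ q ∈ range m, ((2 * m).choose (2 * q + 1) : ℚ) * powerSum (2 * q + 1) N =
      ((N : ℚ) + 1) ^ (2 * m) + (N : ℚ) ^ (2 * m) - 1 := by
  induction N with
  | zero => simp [powerSum, hm]
  | succ N ih =>
    have step := add_pow_sub_sub_pow_two_mul ((N : ℚ) + 1) 1 m
    simp only [one_pow, mul_one, add_sub_cancel_right] at step
    simp only [powerSum_succ, mul_add, sum_add_distrib, ih, ← step]
    push_cast
    ring

theorem powerSum_odd_recursion_general (p N : ℕ) :
    powerSum (2 * p + 1) N =
      (1 / (2 * (p : ℚ) + 2)) *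
        ((((N : ℚ) + 1) ^ (2 * p + 2) + (N : ℚ) ^ (2 * p + 2) - 1) / 2 -
          ∑ q ∈ Finset.range p, ((2 * p + 2).choose (2 * q + 1) : ℚ) * powerSum (2 * q + 1) N) := by
  have h := two_mul_sum_choose_mul_powerSum_odd p.succ_ne_zero N
  rw [sum_range_succ, show 2 * (p + 1) = 2 * p + 1 + 1 by ring, Nat.choose_succ_self_right] at h
  field_simp
  push_cast at h
  linear_combination h

theorem powerSum_odd_recursion (p N : ℕ) (hN : 1 ≤ N) :
    powerSum (2 * p + 1) N =
      (1 / (2 * (p : ℚ) + 2)) *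
        ((((N : ℚ) + 1) ^ (2 * p + 2) + (N : ℚ) ^ (2 * p + 2) - 1) / 2 -
          ∑ q ∈ Finset.range p, ((2 * p + 2).choose (2 * q + 1) : ℚ) * powerSum (2 * q + 1) N) :=
  powerSum_odd_recursion_general p N
end

section
/- Define rational numbers C_p by C_0 = 1 and Σ_{q=0}^p C_{p−q}/(2q+1)! = 0 for p ≥ 1. Then for all p ≥ 0, Σ_{q=0}^p 2^{2q+1}·C_{p−q}/(2q+2)! = 1/(2p+1)!. -/
/-!
With `S(x) = ∑ xⁿ / (2n+1)! = sinh √x / √x`, the recursion says that `∑ C_p xᵖ` is the inverse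
of `S`, while `S² = (cosh (2√x) - 1) / (2x) = ∑ 2^(2n+1) xⁿ / (2n+2)!`. Hence the left-hand side
is the `p`-th coefficient of `S² / S = S`.
-/

open Finset PowerSeries Nat

theorem sum_range_two_mul_eq_sum_pairs {M : Type*} [AddCommMonoid M] (f : ℕ → M) (n : ℕ) :
    ∑ i ∈ range (2 * n), f i = ∑ j ∈ range n, (f (2 * j) + f (2 * j + 1)) := by
  induction n with
  | zero => simp
  | succ n ih => rw [mul_add, mul_one, sum_range_succ, sum_range_succ, sum_range_succ, ih, add_assoc]

theorem sum_range_choose_odd (m : ℕ) :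
    ∑ j ∈ range (m + 1), (2 * m + 2).choose (2 * j + 1) = 2 ^ (2 * m + 1) :=
  calc ∑ j ∈ range (m + 1), (2 * m + 2).choose (2 * j + 1)
      = ∑ j ∈ range (m + 1), ((2 * m + 1).choose (2 * j) + (2 * m + 1).choose (2 * j + 1)) :=
        sum_congr rfl fun j _ => choose_succ_succ (2 * m + 1) (2 * j)
    _ = ∑ i ∈ range (2 * (m + 1)), (2 * m + 1).choose i := (sum_range_two_mul_eq_sum_pairs _ _).symm
    _ = 2 ^ (2 * m + 1) := sum_range_choose _

theorem sum_antidiagonal_inv_factorial_odd_mul {K : Type*} [Field K] [CharZero K] (q : ℕ) :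
    ∑ ij ∈ antidiagonal q, (1 / (2 * ij.1 + 1)! : K) * (1 / (2 * ij.2 + 1)!) =
      2 ^ (2 * q + 1) / (2 * q + 2)! := by
  have hterm : ∀ ij ∈ antidiagonal q, (1 / (2 * ij.1 + 1)! : K) * (1 / (2 * ij.2 + 1)!) =
      ((2 * q + 2).choose (2 * ij.1 + 1) : K) / (2 * q + 2)! := by
    rintro ⟨i, j⟩ hij
    rw [HasAntidiagonal.mem_antidiagonal] at hij
    have hsum : 2 * q + 2 = (2 * i + 1) + (2 * j + 1) := by omega
    have hfac : (((2 * i + 1) + (2 * j + 1))! : K) ≠ 0 := by exact_mod_cast factorial_ne_zero _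
    rw [hsum, cast_add_choose]
    field_simp
  rw [sum_congr rfl hterm, ← sum_div, Nat.sum_antidiagonal_eq_sum_range_succ_mk]
  exact_mod_cast congrArg (fun n : ℕ => (n : K) / (2 * q + 2)!) (sum_range_choose_odd q)

theorem coeff_mk_mul_mk {R : Type*} [CommSemiring R] (a b : ℕ → R) (n : ℕ) :
    coeff n (mk a * mk b) = ∑ k ∈ range (n + 1), a k * b (n - k) := by
  simp only [coeff_mul, coeff_mk]
  exact Nat.sum_antidiagonal_eq_sum_range_succ (fun i j => a i * b j) n

def sinhSqrtDivSqrt (K : Type*) [Field K] : K⟦X⟧ := mk fun n => 1 / (2 * n + 1)!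

theorem sinhSqrtDivSqrt_mul_self (K : Type*) [Field K] [CharZero K] :
    sinhSqrtDivSqrt K * sinhSqrtDivSqrt K = mk fun n => (2 ^ (2 * n + 1) / (2 * n + 2)! : K) := by
  ext q
  simp only [sinhSqrtDivSqrt, coeff_mul, coeff_mk]
  exact sum_antidiagonal_inv_factorial_odd_mul q

theorem C_recursion_c (C : ℕ → ℚ) (hC0 : C 0 = 1)
    (hCrec : ∀ p : ℕ, 1 ≤ p → ∑ q ∈ Finset.range (p + 1), C (p - q) / (Nat.factorial (2 * q + 1) : ℚ) = 0) (p : ℕ) :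
    ∑ q ∈ Finset.range (p + 1), 2 ^ (2 * q + 1) * C (p - q) / (Nat.factorial (2 * q + 2) : ℚ) =
      1 / (Nat.factorial (2 * p + 1) : ℚ) := by
  have hinv : sinhSqrtDivSqrt ℚ * mk C = 1 := by
    ext n
    rw [sinhSqrtDivSqrt, coeff_mk_mul_mk, coeff_one]
    simp only [one_div_mul_eq_div]
    rcases n with _ | n
    · simp [hC0]
    · exact hCrec (n + 1) n.succ_pos
  have hcoeff := congrArg (coeff p) (show sinhSqrtDivSqrt ℚ * sinhSqrtDivSqrt ℚ * mk C =
      sinhSqrtDivSqrt ℚ by rw [mul_assoc, hinv, mul_one])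
  rw [sinhSqrtDivSqrt_mul_self, coeff_mk_mul_mk, sinhSqrtDivSqrt, coeff_mk] at hcoeff
  simpa only [div_mul_eq_mul_div] using hcoeff
end
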